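/- arXiv:2006.09362 — 8 statements merged into one kernel-verified Lean document; each statement's English description precedes it below -/
import Mathlib

section
/- Let P(x) = R(x) - q be a real polynomial of degree n ≥ 2 in x, where R is a monic polynomial with R(0) = 0, and let D(q) = disc_x(P(x)) be the discriminant of P with respect to x (a polynomial in q). Then the polynomial D(R(x)) is divisible by (R'(x))^2; i.e., D(R(x)) = (R'(x))^2 · U(x) for some polynomial U(x) of degree (n-1)(n-2). -/
open Polynomial

/-- The Sylvester matrix of `f` (of degree at most `m`) and `g` (of degree at most `n`). -/
noncomputable def sylvester {R : Type*} [CommRing R] (m n : ℕ) (f g : R[X]) :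
    Matrix (Fin (m + n)) (Fin (m + n)) R :=
  Matrix.of fun i j =>
    if (i : ℕ) < n then
      (if (i : ℕ) ≤ (j : ℕ) ∧ (j : ℕ) ≤ (i : ℕ) + m then f.coeff (m + i - j) else 0)
    else
      (if (i : ℕ) - n ≤ (j : ℕ) ∧ (j : ℕ) ≤ (i : ℕ) then g.coeff ((i : ℕ) - (j : ℕ)) else 0)

/-- The resultant of `f` (degree `m`) and `g` (degree `n`). -/
noncomputable def resultant {R : Type*} [CommRing R] (m n : ℕ) (f g : R[X]) : R :=
  (sylvester m n f g).det

/-- The discriminant of a monic polynomial `f` of degree `n`. -/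
noncomputable def discMonic {R : Type*} [CommRing R] (n : ℕ) (f : R[X]) : R :=
  (-1 : R) ^ (n * (n - 1) / 2) * resultant n (n - 1) f (derivative f)

/-!
Over `ℂ`, the product formula for resultants gives `D(q) = c · ∏ (q - R(θ))` with `c ≠ 0`, where
`θ` runs over the roots of `R'` with multiplicity; in particular `deg D = n - 1`. Hence
`D(R(x)) = c · ∏ (R(x) - R(θ))`, and `(x - θ)²` divides `R(x) - R(θ)` because `θ` is a multiple
root of it, so `R'² = lc(R')² · ∏ (x - θ)²` divides `D(R(x))`. The cofactor has degree
`n(n - 1) - 2(n - 1)`.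
-/

section Resultant

variable {A B : Type*} [CommRing A] [CommRing B]

lemma sylvester_eq_transpose_submatrix_rev (m n : ℕ) (f g : A[X]) :
    sylvester m n f g = (Polynomial.sylvester f g m n).transpose.submatrix Fin.rev Fin.rev := by
  ext i j
  obtain ⟨k, rfl⟩ := Fin.rev_surjective i
  induction k using Fin.addCases with
  | left k =>
    simp only [_root_.sylvester, Polynomial.sylvester, Matrix.of_apply, Matrix.submatrix_apply,
      Matrix.transpose_apply, Fin.rev_rev, Fin.addCases_left, Fin.val_rev, Fin.val_castAdd,
      Set.mem_Icc]
    split_ifs <;> first | omega | (congr 1; omega) | rfl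
  | right k =>
    simp only [_root_.sylvester, Polynomial.sylvester, Matrix.of_apply, Matrix.submatrix_apply,
      Matrix.transpose_apply, Fin.rev_rev, Fin.addCases_right, Fin.val_rev, Fin.val_natAdd,
      Set.mem_Icc]
    split_ifs <;> first | omega | (congr 1; omega) | rfl

lemma resultant_eq_polynomial_resultant (m n : ℕ) (f g : A[X]) :
    resultant m n f g = Polynomial.resultant f g m n := by
  rw [_root_.resultant, sylvester_eq_transpose_submatrix_rev]
  exact (Matrix.det_submatrix_equiv_self Fin.revPerm _).trans (Matrix.det_transpose _)

lemma discMonic_map (ψ : A →+* B) (n : ℕ) (f : A[X]) :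
    discMonic n (f.map ψ) = ψ (discMonic n f) := by
  simp [discMonic, resultant_eq_polynomial_resultant, derivative_map]

lemma map_discMonic_map_C_sub_C_X (φ : A →+* B) (n : ℕ) (p : A[X]) :
    (discMonic n (p.map C - C X)).map φ = discMonic n ((p.map φ).map C - C X) := by
  rw [← coe_mapRingHom, ← discMonic_map]
  simp [Polynomial.map_map, mapRingHom_comp_C]

end Resultant

section Field

variable {K : Type*} [Field K]

noncomputable def criticalValues (p : K[X]) : Multiset K := (derivative p).roots.map p.eval

lemma sq_X_sub_C_dvd_sub_C_eval {p : K[X]} {θ : K} (h : (derivative p).IsRoot θ) :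
    (X - C θ) ^ 2 ∣ p - C (p.eval θ) := by
  by_cases h0 : p - C (p.eval θ) = 0
  · simp [h0]
  rw [← le_rootMultiplicity_iff h0]
  exact (one_lt_rootMultiplicity_iff_isRoot h0).mpr ⟨by simp, by simpa using h⟩

lemma derivative_sq_dvd_prod_criticalValues_comp {p : K[X]} (hp : derivative p ≠ 0)
    (hsplit : (derivative p).Splits) :
    derivative p ^ 2 ∣ ((criticalValues p).map (X - C ·)).prod.comp p := by
  have hprod : ((derivative p).roots.map fun θ ↦ (X - C θ) ^ 2).prod ∣
      ((derivative p).roots.map fun θ ↦ p - C (p.eval θ)).prod :=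
    Multiset.prod_dvd_prod_of_dvd _ _ fun θ hθ ↦
      sq_X_sub_C_dvd_sub_C_eval ((mem_roots hp).mp hθ)
  have hunit : IsUnit (C ((derivative p).leadingCoeff ^ 2)) :=
    isUnit_C.mpr (pow_ne_zero _ (leadingCoeff_ne_zero.mpr hp)).isUnit
  conv_lhs => rw [hsplit.eq_prod_roots]
  rw [mul_pow, ← C_pow, hunit.mul_left_dvd, multiset_prod_comp, criticalValues, Multiset.map_map,
    Multiset.map_map, ← Multiset.prod_map_pow]
  simpa [Function.comp_def] using hprod

variable [CharZero K]

lemma discMonic_map_C_sub_C_X {p : K[X]} {n : ℕ} (hp : p.natDegree = n)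
    (hsplit : (derivative p).Splits) :
    discMonic n (p.map C - C X) =
      C ((-1) ^ (n * (n - 1) / 2 + (n - 1)) * (derivative p).leadingCoeff ^ n) *
        ((criticalValues p).map (X - C ·)).prod := by
  have hderiv : derivative (p.map C - C X) = (derivative p).map C := by
    rw [derivative_sub, derivative_C, sub_zero, derivative_map]
  have hdeg : (p.map C - C X).natDegree ≤ n := (natDegree_sub_le _ _).trans (by simp [hp])
  have hcard : Multiset.card (derivative p).roots = n - 1 := by
    rw [← hsplit.natDegree_eq_card_roots, natDegree_derivative, hp]
  have heval (θ : K) : (p.map C - C X).eval (C θ) = -(X - C (p.eval θ)) := by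
    rw [eval_sub, eval_C, eval_map, eval₂_at_apply, neg_sub]
  have hprod := resultant_eq_prod_eval ((derivative p).map C) (p.map C - C X) n hdeg
    (hsplit.map C)
  rw [natDegree_map_eq_of_injective C_injective, natDegree_derivative, hp] at hprod
  rw [discMonic, resultant_eq_polynomial_resultant, resultant_comm, hderiv,
    Even.neg_one_pow (Nat.even_mul_pred_self n), one_mul, hprod, hsplit.roots_map,
    leadingCoeff_map_of_injective C_injective, Multiset.map_map, criticalValues, Multiset.map_map]
  simp only [Function.comp_def, heval]
  rw [show (fun θ ↦ -(X - C (p.eval θ))) = Neg.neg ∘ fun θ ↦ X - C (p.eval θ) from rfl,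
    ← Multiset.map_map, Multiset.prod_map_neg, Multiset.card_map, hcard]
  simp only [map_mul, map_pow, map_neg, map_one, pow_add]
  ring

lemma natDegree_discMonic_map_C_sub_C_X {p : K[X]} {n : ℕ} (hp : p.natDegree = n) (hn : 0 < n)
    (hsplit : (derivative p).Splits) :
    (discMonic n (p.map C - C X)).natDegree = n - 1 := by
  have hp0 : p ≠ 0 := by rintro rfl; simp at hp; omega
  rw [discMonic_map_C_sub_C_X hp hsplit, natDegree_C_mul, natDegree_multiset_prod_X_sub_C_eq_card,
    criticalValues, Multiset.card_map, ← hsplit.natDegree_eq_card_roots, natDegree_derivative, hp]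
  simp [hp0, hp]

lemma derivative_sq_dvd_discMonic_comp {p : K[X]} {n : ℕ} (hp : p.natDegree = n) (hn : 0 < n)
    (hsplit : (derivative p).Splits) :
    derivative p ^ 2 ∣ (discMonic n (p.map C - C X)).comp p := by
  rw [discMonic_map_C_sub_C_X hp hsplit, mul_comp, C_comp]
  exact dvd_mul_of_dvd_right (derivative_sq_dvd_prod_criticalValues_comp
    (derivative_ne_zero.mpr (by omega)) hsplit) _

end Field

theorem stmt0_general (n : ℕ) (hn : 2 ≤ n) (R : ℝ[X]) (hdeg : R.natDegree = n)
    (D : ℝ[X]) (hD : D = discMonic n (R.map (C : ℝ →+* ℝ[X]) - C X)) :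
    ∃ U : ℝ[X], U.natDegree = (n - 1) * (n - 2) ∧
      D.comp R = (derivative R) ^ 2 * U := by
  set φ := algebraMap ℝ ℂ
  have hdegc : (R.map φ).natDegree = n := by rw [natDegree_map_eq_of_injective φ.injective, hdeg]
  have hsplit : (derivative (R.map φ)).Splits := IsAlgClosed.splits _
  have hDc : D.map φ = discMonic n ((R.map φ).map C - C X) := by
    rw [hD, map_discMonic_map_C_sub_C_X]
  have hdegD : D.natDegree = n - 1 := by
    rw [← natDegree_map_eq_of_injective φ.injective, hDc,
      natDegree_discMonic_map_C_sub_C_X hdegc (by omega) hsplit]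
  obtain ⟨U, hU⟩ : derivative R ^ 2 ∣ D.comp R := by
    rw [← map_dvd_map' φ, Polynomial.map_pow, map_comp, hDc, ← derivative_map]
    exact derivative_sq_dvd_discMonic_comp hdegc (by omega) hsplit
  refine ⟨U, ?_, hU⟩
  have hcomp : (D.comp R).natDegree = (n - 1) * n := by rw [natDegree_comp, hdegD, hdeg]
  have hU0 : U ≠ 0 := by
    rintro rfl
    rw [hU, mul_zero, natDegree_zero] at hcomp
    exact Nat.mul_ne_zero (by omega) (by omega) hcomp.symm
  rw [hU, natDegree_mul (pow_ne_zero _ (derivative_ne_zero.mpr (by omega))) hU0, natDegree_pow,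
    natDegree_derivative, hdeg] at hcomp
  obtain ⟨m, rfl⟩ : ∃ m, n = m + 2 := ⟨n - 2, by omega⟩
  simp only [Nat.add_sub_cancel, show m + 2 - 1 = m + 1 by omega] at hcomp ⊢
  nlinarith

/-- for `P(x) = R(x) - q` with `R` monic of degree `n ≥ 2` and `R(0) = 0`,
the discriminant `D(q)` of `P` with respect to `x` satisfies
`D(R(x)) = (R'(x))^2 · U(x)` with `U` of degree `(n-1)(n-2)`. -/
theorem stmt0 (n : ℕ) (hn : 2 ≤ n) (R : ℝ[X]) (hmonic : R.Monic) (hdeg : R.natDegree = n)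
    (h0 : R.eval 0 = 0)
    (D : ℝ[X]) (hD : D = discMonic n (R.map (C : ℝ →+* ℝ[X]) - C X)) :
    ∃ U : ℝ[X], U.natDegree = (n - 1) * (n - 2) ∧
      D.comp R = (derivative R) ^ 2 * U :=
  stmt0_general n hn R hdeg D hD
end

section
/- Let x : I → ℝ be a differentiable function on an open interval I containing 0 with x(0) = 0 and such that x(q)^3 + p·x(q) - q = 0 for all q in I, where p ≠ 0. Then for all q in I with 4p^3 + 27q^2 ≠ 0, x satisfies the Riccati equation x'(q) = (6p·x(q)^2 + 9q·x(q) + 4p^2)/(4p^3 + 27q^2). -/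
/-!
Differentiating `x(q)³ + p x(q) = q` gives `(3x² + p) x' = 1`. On the cubic
`x³ + px = q` the discriminant factors as
`4p³ + 27q² = (3x² + p)(9x⁴ + 15px² + 4p²)` and the Riccati numerator
`6px² + 9qx + 4p²` equals the second factor, so the right-hand side of the
Riccati equation is `(3x² + p)⁻¹`.
-/

open Filter Topology

theorem HasDerivAt.mul_eq_one_of_cubic_eventuallyEq {x : ℝ → ℝ} {x' p q : ℝ}
    (hx : HasDerivAt x x' q) (hcubic : ∀ᶠ t in 𝓝 q, x t ^ 3 + p * x t = t) :
    (3 * x q ^ 2 + p) * x' = 1 := by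
  have hlhs : HasDerivAt (fun t => x t ^ 3 + p * x t) ((3 * x q ^ 2 + p) * x') q :=
    ((hx.fun_pow 3).fun_add (hx.const_mul p)).congr_deriv (by norm_num; ring)
  have hid : HasDerivAt (fun t => x t ^ 3 + p * x t) 1 q :=
    (hasDerivAt_id q).congr_of_eventuallyEq hcubic
  exact hlhs.unique hid

section CubicIdentities

variable {p q x : ℝ}

theorem cubic_discr_eq_mul (h : x ^ 3 + p * x = q) :
    4 * p ^ 3 + 27 * q ^ 2 = (3 * x ^ 2 + p) * (9 * x ^ 4 + 15 * p * x ^ 2 + 4 * p ^ 2) := by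
  subst h
  ring

theorem cubic_riccati_num_eq (h : x ^ 3 + p * x = q) :
    6 * p * x ^ 2 + 9 * q * x + 4 * p ^ 2 = 9 * x ^ 4 + 15 * p * x ^ 2 + 4 * p ^ 2 := by
  subst h
  ring

theorem cubic_riccati_rhs_eq_inv (h : x ^ 3 + p * x = q) (hdiscr : 4 * p ^ 3 + 27 * q ^ 2 ≠ 0) :
    (6 * p * x ^ 2 + 9 * q * x + 4 * p ^ 2) / (4 * p ^ 3 + 27 * q ^ 2) = (3 * x ^ 2 + p)⁻¹ := by
  rw [cubic_discr_eq_mul h] at hdiscr ⊢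
  rw [cubic_riccati_num_eq h, div_mul_cancel_right₀ (right_ne_zero_of_mul hdiscr)]

end CubicIdentities

theorem stmt6_general (p : ℝ) (a b : ℝ)
    (x : ℝ → ℝ) (hdiff : ∀ q ∈ Set.Ioo a b, DifferentiableAt ℝ x q)
    (hroot : ∀ q ∈ Set.Ioo a b, (x q) ^ 3 + p * x q - q = 0) :
    ∀ q ∈ Set.Ioo a b, 4 * p ^ 3 + 27 * q ^ 2 ≠ 0 →
      deriv x q = (6 * p * (x q) ^ 2 + 9 * q * x q + 4 * p ^ 2) / (4 * p ^ 3 + 27 * q ^ 2) := by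
  intro q hq hdiscr
  have hcubic : ∀ t ∈ Set.Ioo a b, x t ^ 3 + p * x t = t := fun t ht =>
    sub_eq_zero.mp (hroot t ht)
  have hmul : (3 * x q ^ 2 + p) * deriv x q = 1 :=
    (hdiff q hq).hasDerivAt.mul_eq_one_of_cubic_eventuallyEq
      (eventually_of_mem (Ioo_mem_nhds hq.1 hq.2) hcubic)
  rw [cubic_riccati_rhs_eq_inv (hcubic q hq) hdiscr]
  exact eq_inv_of_mul_eq_one_right hmul

/-- a differentiable root branch of `x³ + px - q = 0` with `x(0) = 0`
satisfies the Riccati ODE `x' = (6px² + 9qx + 4p²)/(4p³ + 27q²)`. -/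
theorem stmt6 (p : ℝ) (hp : p ≠ 0) (a b : ℝ) (ha : a < 0) (hb : 0 < b)
    (x : ℝ → ℝ) (hdiff : ∀ q ∈ Set.Ioo a b, DifferentiableAt ℝ x q)
    (hx0 : x 0 = 0)
    (hroot : ∀ q ∈ Set.Ioo a b, (x q) ^ 3 + p * x q - q = 0) :
    ∀ q ∈ Set.Ioo a b, 4 * p ^ 3 + 27 * q ^ 2 ≠ 0 →
      deriv x q = (6 * p * (x q) ^ 2 + 9 * q * x q + 4 * p ^ 2) / (4 * p ^ 3 + 27 * q ^ 2) :=
  stmt6_general p a b x hdiff hroot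
end

section
/- Let x : I → ℝ be a differentiable function on an open interval I containing 0 with x(0) = 0 and such that x(q)^4 + p·x(q) - q = 0 for all q in I, where p ≠ 0. Then for all q in I with 27p^4 + 256q^3 ≠ 0, x satisfies the Abel equation x'(q) = (36p^2·x(q)^3 + 48pq·x(q)^2 + 64q^2·x(q) + 27p^3)/(27p^4 + 256q^3). -/
/-! Differentiating `x(q)⁴ + p·x(q) = q` gives `x'(q)·(4x(q)³ + p) = 1`. The discriminant
`27p⁴ + 256q³` of `y⁴ + py − q` lies in the ideal generated by this polynomial and its
derivative `4y³ + p`, with cofactor of the derivative `36p²y³ + 48pqy² + 64q²y + 27p³`;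
evaluating at the root `y = x(q)` turns `1 / (4x(q)³ + p)` into the stated quotient. -/

open Filter Topology

theorem HasDerivAt.mul_eq_one_of_comp_eventuallyEq_id {F x : ℝ → ℝ} {F' x' q : ℝ}
    (hF : HasDerivAt F F' (x q)) (hx : HasDerivAt x x' q) (hinv : F ∘ x =ᶠ[𝓝 q] id) :
    F' * x' = 1 := by
  have hcomp : HasDerivAt (F ∘ x) (F' * x') q := hF.comp q hx
  exact hcomp.unique ((hasDerivAt_id q).congr_of_eventuallyEq hinv)

theorem quartic_discriminant_eq_mul_derivative {p q c : ℝ} (hc : c ^ 4 + p * c = q) :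
    27 * p ^ 4 + 256 * q ^ 3 =
      (36 * p ^ 2 * c ^ 3 + 48 * p * q * c ^ 2 + 64 * q ^ 2 * c + 27 * p ^ 3) * (4 * c ^ 3 + p) := by
  linear_combination -(144 * p ^ 2 * c ^ 2 + 192 * p * q * c + 256 * q ^ 2) * hc

theorem stmt7_general (p : ℝ) (a b : ℝ)
    (x : ℝ → ℝ) (hdiff : ∀ q ∈ Set.Ioo a b, DifferentiableAt ℝ x q)
    (hroot : ∀ q ∈ Set.Ioo a b, (x q) ^ 4 + p * x q - q = 0) :
    ∀ q ∈ Set.Ioo a b, 27 * p ^ 4 + 256 * q ^ 3 ≠ 0 →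
      deriv x q = (36 * p ^ 2 * (x q) ^ 3 + 48 * p * q * (x q) ^ 2 + 64 * q ^ 2 * x q
        + 27 * p ^ 3) / (27 * p ^ 4 + 256 * q ^ 3) := by
  intro q hq hdisc
  have hinv : (fun y => y ^ 4 + p * y) ∘ x =ᶠ[𝓝 q] id := by
    filter_upwards [isOpen_Ioo.mem_nhds hq] with r hr
    exact sub_eq_zero.mp (hroot r hr)
  have hF : HasDerivAt (fun y => y ^ 4 + p * y) (4 * x q ^ 3 + p) (x q) := by
    simpa using (hasDerivAt_pow 4 (x q)).fun_add ((hasDerivAt_id' (x q)).const_mul p)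
  have hderiv : (4 * x q ^ 3 + p) * deriv x q = 1 :=
    hF.mul_eq_one_of_comp_eventuallyEq_id (hdiff q hq).hasDerivAt hinv
  rw [eq_div_iff hdisc, quartic_discriminant_eq_mul_derivative (sub_eq_zero.mp (hroot q hq))]
  linear_combination (36 * p ^ 2 * x q ^ 3 + 48 * p * q * x q ^ 2 + 64 * q ^ 2 * x q
    + 27 * p ^ 3) * hderiv

/-- a differentiable root branch of `x⁴ + px - q = 0` with `x(0) = 0`
satisfies the Abel ODE `x' = (36p²x³ + 48pqx² + 64q²x + 27p³)/(27p⁴ + 256q³)`. -/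
theorem stmt7 (p : ℝ) (hp : p ≠ 0) (a b : ℝ) (ha : a < 0) (hb : 0 < b)
    (x : ℝ → ℝ) (hdiff : ∀ q ∈ Set.Ioo a b, DifferentiableAt ℝ x q)
    (hx0 : x 0 = 0)
    (hroot : ∀ q ∈ Set.Ioo a b, (x q) ^ 4 + p * x q - q = 0) :
    ∀ q ∈ Set.Ioo a b, 27 * p ^ 4 + 256 * q ^ 3 ≠ 0 →
      deriv x q = (36 * p ^ 2 * (x q) ^ 3 + 48 * p * q * (x q) ^ 2 + 64 * q ^ 2 * x q
        + 27 * p ^ 3) / (27 * p ^ 4 + 256 * q ^ 3) :=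
  stmt7_general p a b x hdiff hroot
end

section
/- Let x : I → ℝ be a twice-differentiable function on an open interval I containing 0 satisfying x(q)^3 + p·x(q) - q = 0 for all q in I, with x(0) = 0 and p ≠ 0. Then x satisfies the second-order linear ODE (4p^3 + 27q^2)·x''(q) + 27q·x'(q) - 3·x(q) = 0 on I. -/
/-! Differentiating the identity `x³ + p x - q = 0` once and twice gives `(3x² + p) x' = 1` and
`(3x² + p) x'' + 6 x x'² = 0`, so `x' = 1 / (3x² + p)` and `x'' = -6x / (3x² + p)³`. Along the curve
the discriminant factors as `4p³ + 27q² = (3x² + p)² (3x² + 4p)`, and substituting everything into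
the differential operator leaves a polynomial in `x` that vanishes identically. -/

open Filter Topology

lemma HasDerivAt.eq_zero_of_eventuallyEq_zero {f : ℝ → ℝ} {f' q : ℝ} (hf : HasDerivAt f f' q)
    (h : f =ᶠ[𝓝 q] 0) : f' = 0 :=
  hf.unique ((hasDerivAt_const q 0).congr_of_eventuallyEq h)

section CubicBranch

variable {s : Set ℝ} {p : ℝ} {x : ℝ → ℝ}

lemma cubic_branch_deriv (hs : IsOpen s) (hdiff : ∀ q ∈ s, DifferentiableAt ℝ x q)
    (hroot : ∀ q ∈ s, x q ^ 3 + p * x q - q = 0) :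
    ∀ q ∈ s, (3 * x q ^ 2 + p) * deriv x q - 1 = 0 := by
  intro q hq
  have hx := (hdiff q hq).hasDerivAt
  have hF : HasDerivAt (fun t => x t ^ 3 + p * x t - t) ((3 * x q ^ 2 + p) * deriv x q - 1) q :=
    (((hx.fun_pow 3).add (hx.const_mul p)).sub (hasDerivAt_id' q)).congr_deriv (by ring)
  exact hF.eq_zero_of_eventuallyEq_zero (eventually_of_mem (hs.mem_nhds hq) hroot)

lemma cubic_branch_deriv_deriv (hs : IsOpen s) (hdiff : ∀ q ∈ s, DifferentiableAt ℝ x q)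
    (hdiff2 : ∀ q ∈ s, DifferentiableAt ℝ (deriv x) q)
    (hroot : ∀ q ∈ s, x q ^ 3 + p * x q - q = 0) :
    ∀ q ∈ s, (3 * x q ^ 2 + p) * deriv (deriv x) q + 6 * x q * deriv x q ^ 2 = 0 := by
  intro q hq
  have hx := (hdiff q hq).hasDerivAt
  have hG : HasDerivAt (fun t => (3 * x t ^ 2 + p) * deriv x t - 1)
      ((3 * x q ^ 2 + p) * deriv (deriv x) q + 6 * x q * deriv x q ^ 2) q :=
    (((((hx.fun_pow 2).const_mul 3).add_const p).mul (hdiff2 q hq).hasDerivAt).sub_const 1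
      ).congr_deriv (by ring)
  exact hG.eq_zero_of_eventuallyEq_zero
    (eventually_of_mem (hs.mem_nhds hq) (cubic_branch_deriv hs hdiff hroot))

end CubicBranch

lemma cubic_branch_ode_of_jet {p q u v w : ℝ} (hu : u ^ 3 + p * u - q = 0)
    (hv : (3 * u ^ 2 + p) * v - 1 = 0) (hw : (3 * u ^ 2 + p) * w + 6 * u * v ^ 2 = 0) :
    (4 * p ^ 3 + 27 * q ^ 2) * w + 27 * q * v - 3 * u = 0 := by
  have hA : 3 * u ^ 2 + p ≠ 0 := by
    rintro h
    simp only [h, zero_mul, zero_sub, neg_eq_zero, one_ne_zero] at hv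
  -- Along the curve `4p³ + 27q² = (3u² + p)² (3u² + 4p) - 27 (u³ + pu - q) (q + u³ + pu)`.
  have key : (3 * u ^ 2 + p) * ((4 * p ^ 3 + 27 * q ^ 2) * w + 27 * q * v - 3 * u) = 0 := by
    linear_combination (4 * p ^ 3 + 27 * q ^ 2) * hw
      + (27 * q - 6 * u * (3 * u ^ 2 + 4 * p) * ((3 * u ^ 2 + p) * v + 1)) * hv
      + (162 * u * (q + u ^ 3 + p * u) * v ^ 2 - 27) * hu
  exact (mul_eq_zero.mp key).resolve_left hA

theorem stmt10_general (p : ℝ) (a b : ℝ)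
    (x : ℝ → ℝ)
    (hdiff : ∀ q ∈ Set.Ioo a b, DifferentiableAt ℝ x q)
    (hdiff2 : ∀ q ∈ Set.Ioo a b, DifferentiableAt ℝ (deriv x) q)
    (hroot : ∀ q ∈ Set.Ioo a b, (x q) ^ 3 + p * x q - q = 0) :
    ∀ q ∈ Set.Ioo a b,
      (4 * p ^ 3 + 27 * q ^ 2) * deriv (deriv x) q + 27 * q * deriv x q - 3 * x q = 0 :=
  fun q hq => cubic_branch_ode_of_jet (hroot q hq)
    (cubic_branch_deriv isOpen_Ioo hdiff hroot q hq)
    (cubic_branch_deriv_deriv isOpen_Ioo hdiff hdiff2 hroot q hq)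

/-- a twice-differentiable root branch of `x³ + px - q = 0` with `x(0) = 0`
satisfies `(4p³ + 27q²)·x'' + 27q·x' - 3x = 0`. -/
theorem stmt10 (p : ℝ) (hp : p ≠ 0) (a b : ℝ) (ha : a < 0) (hb : 0 < b)
    (hdisc : ∀ q ∈ Set.Ioo a b, 4 * p ^ 3 + 27 * q ^ 2 ≠ 0)
    (x : ℝ → ℝ)
    (hdiff : ∀ q ∈ Set.Ioo a b, DifferentiableAt ℝ x q)
    (hdiff2 : ∀ q ∈ Set.Ioo a b, DifferentiableAt ℝ (deriv x) q)
    (hx0 : x 0 = 0)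
    (hroot : ∀ q ∈ Set.Ioo a b, (x q) ^ 3 + p * x q - q = 0) :
    ∀ q ∈ Set.Ioo a b,
      (4 * p ^ 3 + 27 * q ^ 2) * deriv (deriv x) q + 27 * q * deriv x q - 3 * x q = 0 :=
  stmt10_general p a b x hdiff hdiff2 hroot
end

section
/- Let x : I → ℝ be a three-times differentiable function on an open interval I containing 0 satisfying x(q)^4 + p·x(q) - q = 0 for all q in I, with x(0) = 0 and p ≠ 0. Then x satisfies the third-order linear ODE (27p^4 + 256q^3)·x'''(q) + 1152q^2·x''(q) + 688q·x'(q) - 40·x(q) = 0 on I. -/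
/-! Differentiating `x⁴ + p x = q` gives `(4x³ + p) x' = 1`, so `4x³ + p` never vanishes and
`x' = 1 / (4x³ + p)`. Differentiating this twice by the chain rule expresses `x''` and `x'''`
as rational functions of `x` alone, and after substituting `q = x⁴ + p x` the differential
equation becomes an identity between rational functions of `x`. -/

open Filter Set Topology

theorem HasDerivAt.of_eqOn_comp {𝕜 : Type*} [NontriviallyNormedField 𝕜] {s : Set 𝕜}
    {x y h : 𝕜 → 𝕜} {t x' h' : 𝕜} (hs : s ∈ 𝓝 t) (hy : EqOn y (h ∘ x) s)
    (hh : HasDerivAt h h' (x t)) (hx : HasDerivAt x x' t) : HasDerivAt y (h' * x') t :=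
  (hh.comp t hx).congr_of_eventuallyEq (eventuallyEq_of_mem hs hy)

section QuarticRoot

variable {p : ℝ}

theorem hasDerivAt_four_mul_cube_add (u : ℝ) :
    HasDerivAt (fun v => 4 * v ^ 3 + p) (12 * u ^ 2) u :=
  (((hasDerivAt_pow 3 u).const_mul 4).add_const p).congr_deriv (by norm_num; ring)

theorem hasDerivAt_one_div_four_mul_cube_add {u : ℝ} (hu : 4 * u ^ 3 + p ≠ 0) :
    HasDerivAt (fun v => 1 / (4 * v ^ 3 + p)) (-12 * u ^ 2 / (4 * u ^ 3 + p) ^ 2) u :=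
  ((hasDerivAt_const u 1).fun_div (hasDerivAt_four_mul_cube_add u) hu).congr_deriv (by ring)

theorem hasDerivAt_sq_div_four_mul_cube_add_pow_three {u : ℝ} (hu : 4 * u ^ 3 + p ≠ 0) :
    HasDerivAt (fun v => -12 * v ^ 2 / (4 * v ^ 3 + p) ^ 3)
      ((432 * u ^ 4 - 24 * u * (4 * u ^ 3 + p)) / (4 * u ^ 3 + p) ^ 4) u :=
  (((hasDerivAt_pow 2 u).const_mul (-12)).fun_div ((hasDerivAt_four_mul_cube_add u).fun_pow 3)
    (pow_ne_zero 3 hu)).congr_deriv (by field_simp; norm_num; ring)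

theorem quarticRoot_hasDerivAt {s : Set ℝ} (hs : IsOpen s) {x : ℝ → ℝ}
    (hdiff : ∀ t ∈ s, DifferentiableAt ℝ x t) (hroot : ∀ t ∈ s, x t ^ 4 + p * x t - t = 0)
    {t : ℝ} (ht : t ∈ s) :
    4 * x t ^ 3 + p ≠ 0 ∧ HasDerivAt x (1 / (4 * x t ^ 3 + p)) t := by
  have hx := (hdiff t ht).hasDerivAt
  have hF : HasDerivAt (fun t => x t ^ 4 + p * x t) ((4 * x t ^ 3 + p) * deriv x t) t :=
    ((hx.fun_pow 4).fun_add (hx.const_mul p)).congr_deriv (by norm_num; ring)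
  have hid : HasDerivAt (fun t => x t ^ 4 + p * x t) 1 t :=
    (hasDerivAt_id' t).congr_of_eventuallyEq <| eventuallyEq_of_mem (hs.mem_nhds ht)
      fun t ht => by linarith [hroot t ht]
  have hchain : (4 * x t ^ 3 + p) * deriv x t = 1 := hF.unique hid
  refine ⟨left_ne_zero_of_mul_eq_one hchain, ?_⟩
  rwa [eq_one_div_of_mul_eq_one_right hchain] at hx

theorem quarticRoot_ode_identity {u q : ℝ} (hu : 4 * u ^ 3 + p ≠ 0)
    (hroot : u ^ 4 + p * u - q = 0) :
    (27 * p ^ 4 + 256 * q ^ 3) * ((432 * u ^ 4 - 24 * u * (4 * u ^ 3 + p)) / (4 * u ^ 3 + p) ^ 5)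
      + 1152 * q ^ 2 * (-12 * u ^ 2 / (4 * u ^ 3 + p) ^ 3)
      + 688 * q * (1 / (4 * u ^ 3 + p)) - 40 * u = 0 := by
  obtain rfl : q = u ^ 4 + p * u := by linarith
  -- with `p` eliminated in favour of `D = 4u³ + p`, `field_simp` sees a single atomic denominator
  obtain ⟨D, hD, rfl⟩ : ∃ D, D ≠ 0 ∧ p = D - 4 * u ^ 3 := ⟨_, hu, by ring⟩
  field_simp
  ring

theorem quarticRoot_ode {s : Set ℝ} (hs : IsOpen s) {x : ℝ → ℝ}
    (hdiff : ∀ t ∈ s, DifferentiableAt ℝ x t) (hroot : ∀ t ∈ s, x t ^ 4 + p * x t - t = 0)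
    {q : ℝ} (hq : q ∈ s) :
    (27 * p ^ 4 + 256 * q ^ 3) * deriv (deriv (deriv x)) q
      + 1152 * q ^ 2 * deriv (deriv x) q + 688 * q * deriv x q - 40 * x q = 0 := by
  have hx t (ht : t ∈ s) := quarticRoot_hasDerivAt hs hdiff hroot ht
  have hderiv1 : EqOn (deriv x) ((fun v => 1 / (4 * v ^ 3 + p)) ∘ x) s := fun t ht =>
    (hx t ht).2.deriv
  have hderiv2 t (ht : t ∈ s) :
      HasDerivAt (deriv x) (-12 * x t ^ 2 / (4 * x t ^ 3 + p) ^ 3) t :=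
    (HasDerivAt.of_eqOn_comp (hs.mem_nhds ht) hderiv1
      (hasDerivAt_one_div_four_mul_cube_add (hx t ht).1) (hx t ht).2).congr_deriv (by field_simp)
  have hderiv3 : HasDerivAt (deriv (deriv x))
      ((432 * x q ^ 4 - 24 * x q * (4 * x q ^ 3 + p)) / (4 * x q ^ 3 + p) ^ 5) q :=
    (HasDerivAt.of_eqOn_comp (hs.mem_nhds hq) (fun t ht => (hderiv2 t ht).deriv)
      (hasDerivAt_sq_div_four_mul_cube_add_pow_three (hx q hq).1) (hx q hq).2).congr_deriv
      (by field_simp)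
  rw [hderiv3.deriv, (hderiv2 q hq).deriv, (hx q hq).2.deriv]
  exact quarticRoot_ode_identity (hx q hq).1 (hroot q hq)

end QuarticRoot

theorem stmt11_general (p : ℝ) (a b : ℝ)
    (x : ℝ → ℝ)
    (hdiff : ∀ q ∈ Set.Ioo a b, DifferentiableAt ℝ x q)
    (hroot : ∀ q ∈ Set.Ioo a b, (x q) ^ 4 + p * x q - q = 0) :
    ∀ q ∈ Set.Ioo a b,
      (27 * p ^ 4 + 256 * q ^ 3) * deriv (deriv (deriv x)) q
        + 1152 * q ^ 2 * deriv (deriv x) q + 688 * q * deriv x q - 40 * x q = 0 :=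
  fun _ hq => quarticRoot_ode isOpen_Ioo hdiff hroot hq

/-- a three-times differentiable root branch of `x⁴ + px - q = 0` with
`x(0) = 0` satisfies `(27p⁴ + 256q³)·x''' + 1152q²·x'' + 688q·x' - 40x = 0`. -/
theorem stmt11 (p : ℝ) (hp : p ≠ 0) (a b : ℝ) (ha : a < 0) (hb : 0 < b)
    (hdisc : ∀ q ∈ Set.Ioo a b, 27 * p ^ 4 + 256 * q ^ 3 ≠ 0)
    (x : ℝ → ℝ)
    (hdiff : ∀ q ∈ Set.Ioo a b, DifferentiableAt ℝ x q)
    (hdiff2 : ∀ q ∈ Set.Ioo a b, DifferentiableAt ℝ (deriv x) q)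
    (hdiff3 : ∀ q ∈ Set.Ioo a b, DifferentiableAt ℝ (deriv (deriv x)) q)
    (hx0 : x 0 = 0)
    (hroot : ∀ q ∈ Set.Ioo a b, (x q) ^ 4 + p * x q - q = 0) :
    ∀ q ∈ Set.Ioo a b,
      (27 * p ^ 4 + 256 * q ^ 3) * deriv (deriv (deriv x)) q
        + 1152 * q ^ 2 * deriv (deriv x) q + 688 * q * deriv x q - 40 * x q = 0 :=
  stmt11_general p a b x hdiff hroot
end

section
/- Let x : I → ℝ be a twice-differentiable function satisfying x(q)^3 + s·x(q)^2 + p·x(q) - q = 0 on an open interval I. Then on I it satisfies the non-homogeneous linear ODE (4p^3 + 27q^2 + 18pqs - p^2s^2 - 4qs^3)·x''(q) + (27q + 9ps - 2s^3)·x'(q) - 3·x(q) - s = 0, provided 4p^3 + 27q^2 + 18pqs - p^2s^2 - 4qs^3 ≠ 0 on I. -/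
/-!
Differentiating `P (x q) = q` twice, with `P = X³ + sX² + pX`, gives `P'(x) x' = 1` and
`P''(x) x'² + P'(x) x'' = 0`. The first shows `P'(x) ≠ 0`; multiplying the claimed ODE by
`P'(x)³` and eliminating `x'` and `x''` leaves a polynomial identity in `x` once `q` is
replaced by `P (x)`.
-/

open Polynomial Filter Topology Set

section ImplicitDifferentiation

variable {𝕜 : Type*} [NontriviallyNormedField 𝕜]

theorem Polynomial.eval_derivative_mul_eq_one_of_eventually_eval_comp_eq
    {P : 𝕜[X]} {x : 𝕜 → 𝕜} {u q : 𝕜} (hx : HasDerivAt x u q)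
    (h : ∀ᶠ t in 𝓝 q, P.eval (x t) = t) : P.derivative.eval (x q) * u = 1 :=
  ((P.hasDerivAt (x q)).comp q hx).unique ((hasDerivAt_id q).congr_of_eventuallyEq h)

theorem Polynomial.eval_derivative_mul_mul_add_eq_zero_of_eventually_eval_mul_eq_one
    {Q : 𝕜[X]} {x y : 𝕜 → 𝕜} {u v q : 𝕜} (hx : HasDerivAt x u q) (hy : HasDerivAt y v q)
    (h : ∀ᶠ t in 𝓝 q, Q.eval (x t) * y t = 1) :
    Q.derivative.eval (x q) * u * y q + Q.eval (x q) * v = 0 :=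
  (((Q.hasDerivAt (x q)).comp q hx).mul hy).unique
    ((hasDerivAt_const q 1).congr_of_eventuallyEq h)

end ImplicitDifferentiation

noncomputable def cubicPoly (s p : ℝ) : ℝ[X] := X ^ 3 + C s * X ^ 2 + C p * X

@[simp] theorem eval_cubicPoly (s p y : ℝ) :
    (cubicPoly s p).eval y = y ^ 3 + s * y ^ 2 + p * y := by
  simp [cubicPoly]

@[simp] theorem eval_derivative_cubicPoly (s p y : ℝ) :
    (cubicPoly s p).derivative.eval y = 3 * y ^ 2 + 2 * s * y + p := by
  simp [cubicPoly]
  ring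

@[simp] theorem eval_derivative_derivative_cubicPoly (s p y : ℝ) :
    (cubicPoly s p).derivative.derivative.eval y = 6 * y + 2 * s := by
  simp [cubicPoly]
  ring

theorem cubic_branch_ode_of_implicit_derivatives {p s q y u v : ℝ}
    (hroot : y ^ 3 + s * y ^ 2 + p * y = q)
    (hslope : (3 * y ^ 2 + 2 * s * y + p) * u = 1)
    (hcurv : (6 * y + 2 * s) * u * u + (3 * y ^ 2 + 2 * s * y + p) * v = 0) :
    (4 * p ^ 3 + 27 * q ^ 2 + 18 * p * q * s - p ^ 2 * s ^ 2 - 4 * q * s ^ 3) * v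
      + (27 * q + 9 * p * s - 2 * s ^ 3) * u - 3 * y - s = 0 := by
  set g := 3 * y ^ 2 + 2 * s * y + p
  set D := 4 * p ^ 3 + 27 * q ^ 2 + 18 * p * q * s - p ^ 2 * s ^ 2 - 4 * q * s ^ 3
  have hg : g ≠ 0 := left_ne_zero_of_mul_eq_one hslope
  refine (mul_eq_zero.mp ?_).resolve_left (pow_ne_zero 3 hg)
  -- After `hcurv` and `hslope` remove `v` and `u`, what is left is
  -- `-D (6y + 2s) + (27q + 9ps - 2s³) g² - (3y + s) g³`, which vanishes modulo `hroot`.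
  linear_combination
    ((27 * q + 9 * p * s - 2 * s ^ 3) * g ^ 2 - D * (6 * y + 2 * s) * (g * u + 1)) * hslope
      + D * g ^ 2 * hcurv
      + ((6 * y + 2 * s) * (27 * (q + (y ^ 3 + s * y ^ 2 + p * y)) + 18 * p * s - 4 * s ^ 3)
          - 27 * g ^ 2) * hroot

theorem stmt12_general (p s : ℝ) (a b : ℝ)
    (x : ℝ → ℝ)
    (hdiff : ∀ q ∈ Set.Ioo a b, DifferentiableAt ℝ x q)
    (hdiff2 : ∀ q ∈ Set.Ioo a b, DifferentiableAt ℝ (deriv x) q)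
    (hroot : ∀ q ∈ Set.Ioo a b, (x q) ^ 3 + s * (x q) ^ 2 + p * x q - q = 0) :
    ∀ q ∈ Set.Ioo a b,
      (4 * p ^ 3 + 27 * q ^ 2 + 18 * p * q * s - p ^ 2 * s ^ 2 - 4 * q * s ^ 3)
          * deriv (deriv x) q
        + (27 * q + 9 * p * s - 2 * s ^ 3) * deriv x q - 3 * x q - s = 0 := by
  have hslope (t : ℝ) (ht : t ∈ Ioo a b) :
      (cubicPoly s p).derivative.eval (x t) * deriv x t = 1 := by
    refine eval_derivative_mul_eq_one_of_eventually_eval_comp_eq (hdiff t ht).hasDerivAt ?_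
    filter_upwards [isOpen_Ioo.mem_nhds ht] with r hr
    simpa [sub_eq_zero] using hroot r hr
  intro q hq
  have hcurv := eval_derivative_mul_mul_add_eq_zero_of_eventually_eval_mul_eq_one
    (hdiff q hq).hasDerivAt (hdiff2 q hq).hasDerivAt
    (eventually_of_mem (isOpen_Ioo.mem_nhds hq) hslope)
  simp only [eval_derivative_cubicPoly, eval_derivative_derivative_cubicPoly] at hslope hcurv
  exact cubic_branch_ode_of_implicit_derivatives (sub_eq_zero.mp (hroot q hq))
    (hslope q hq) hcurv

/-- a twice-differentiable root branch of `x³ + sx² + px - q = 0` satisfies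
the non-homogeneous linear ODE
`(4p³+27q²+18pqs-p²s²-4qs³)·x'' + (27q+9ps-2s³)·x' - 3x - s = 0`. -/
theorem stmt12 (p s : ℝ) (a b : ℝ) (hab : a < b)
    (hdisc : ∀ q ∈ Set.Ioo a b,
      4 * p ^ 3 + 27 * q ^ 2 + 18 * p * q * s - p ^ 2 * s ^ 2 - 4 * q * s ^ 3 ≠ 0)
    (x : ℝ → ℝ)
    (hdiff : ∀ q ∈ Set.Ioo a b, DifferentiableAt ℝ x q)
    (hdiff2 : ∀ q ∈ Set.Ioo a b, DifferentiableAt ℝ (deriv x) q)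
    (hroot : ∀ q ∈ Set.Ioo a b, (x q) ^ 3 + s * (x q) ^ 2 + p * x q - q = 0) :
    ∀ q ∈ Set.Ioo a b,
      (4 * p ^ 3 + 27 * q ^ 2 + 18 * p * q * s - p ^ 2 * s ^ 2 - 4 * q * s ^ 3)
          * deriv (deriv x) q
        + (27 * q + 9 * p * s - 2 * s ^ 3) * deriv x q - 3 * x q - s = 0 :=
  stmt12_general p s a b x hdiff hdiff2 hroot
end

section
/- For p < 0 and |q| < √(-4p^3/27), the real number x = (2√(-p)/√3)·sin((1/3)·arcsin((3√3 q)/(2p√(-p)))) satisfies x^3 + p·x - q = 0. -/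
/-! With `m = 2√(-p)/√3` we have `m² = -4p/3`, so for `x = m s` the triple-angle formula gives
`x³ + p x = (m p / 3)(3 s - 4 s³) = (m p / 3) sin (3θ)` when `s = sin θ`. Taking `3θ = arcsin t` with
`t = 3q/(m p)` makes this `q`; the bound on `|q|` is exactly `|t| ≤ 1`, so that `sin (arcsin t) = t`. -/

open Real

theorem three_mul_sin_third_arcsin_sub {t : ℝ} (h₁ : -1 ≤ t) (h₂ : t ≤ 1) :
    3 * sin (1 / 3 * arcsin t) - 4 * sin (1 / 3 * arcsin t) ^ 3 = t := by
  rw [← sin_three_mul, ← mul_assoc, mul_one_div_cancel three_ne_zero, one_mul, sin_arcsin h₁ h₂]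

theorem mul_pow_three_add_mul_of_sq_eq {m p : ℝ} (hm : m ^ 2 = -4 * p / 3) (s : ℝ) :
    (m * s) ^ 3 + p * (m * s) = m * p / 3 * (3 * s - 4 * s ^ 3) := by
  linear_combination m * s ^ 3 * hm

theorem sq_three_mul_sqrt_three_div_le_one {p q : ℝ} (hp : p < 0) (hq : 27 * q ^ 2 ≤ -4 * p ^ 3) :
    (3 * √3 * q / (2 * p * √(-p))) ^ 2 ≤ 1 := by
  have hsq : (3 * √3 * q / (2 * p * √(-p))) ^ 2 = 27 * q ^ 2 / (-4 * p ^ 3) := by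
    rw [div_pow, mul_pow, mul_pow, mul_pow, mul_pow, sq_sqrt (by norm_num), sq_sqrt (by linarith)]
    ring
  rw [hsq, div_le_one (by nlinarith [pow_pos (neg_pos.2 hp) 3])]
  exact hq

/-- for `p < 0` and `|q| < √(-4p³/27)`,
`x = (2√(-p)/√3)·sin((1/3)·arcsin(3√3 q/(2p√(-p))))` solves `x³ + px - q = 0`. -/
theorem stmt14 (p q : ℝ) (hp : p < 0) (hq : |q| < Real.sqrt (-4 * p ^ 3 / 27))
    (x : ℝ)
    (hx : x = (2 * Real.sqrt (-p) / Real.sqrt 3) *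
      Real.sin ((1 / 3) * Real.arcsin (3 * Real.sqrt 3 * q / (2 * p * Real.sqrt (-p))))) :
    x ^ 3 + p * x - q = 0 := by
  have hm : (2 * √(-p) / √3) ^ 2 = -4 * p / 3 := by
    rw [div_pow, mul_pow, sq_sqrt (by linarith), sq_sqrt (by norm_num)]
    ring
  have hq_sq : 27 * q ^ 2 ≤ -4 * p ^ 3 := by
    have h := (lt_sqrt (abs_nonneg q)).1 hq
    rw [sq_abs] at h
    linarith
  have ht : |3 * √3 * q / (2 * p * √(-p))| ≤ 1 :=
    (sq_le_one_iff_abs_le_one _).1 (sq_three_mul_sqrt_three_div_le_one hp hq_sq)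
  rw [hx, mul_pow_three_add_mul_of_sq_eq hm,
    three_mul_sin_third_arcsin_sub (abs_le.1 ht).1 (abs_le.1 ht).2]
  have hr : √(-p) ≠ 0 := (sqrt_pos.2 (neg_pos.2 hp)).ne'
  field_simp [hp.ne]
  ring
end

section
/- Let p, q, x, w be real numbers with p ≠ 0. If (2xw + 1)^2 + 1 - 2p·w^3 = 0 and -p^2·w^6 + 4q·w^4 + 1 = 0, then x^4 + p·x - q = 0. -/
/-! The first equation, multiplied by `4x²w² - 4xw + 2 + 2pw³`, minus four times the second,
is `16w⁴(x⁴ + px - q)`; the second equation rules out `w = 0`. -/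

theorem quartic_mul_sixteen_pow_four {R : Type*} [CommRing R] (p q x w : R) :
    (x ^ 4 + p * x - q) * (16 * w ^ 4) =
      (4 * x ^ 2 * w ^ 2 - 4 * x * w + 2 + 2 * p * w ^ 3) *
          ((2 * x * w + 1) ^ 2 + 1 - 2 * p * w ^ 3) -
        4 * (-p ^ 2 * w ^ 6 + 4 * q * w ^ 4 + 1) := by
  ring

theorem quartic_eq_zero_of_resultant_system {K : Type*} [Field K] [NeZero (2 : K)]
    {p q x w : K} (h1 : (2 * x * w + 1) ^ 2 + 1 - 2 * p * w ^ 3 = 0)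
    (h2 : -p ^ 2 * w ^ 6 + 4 * q * w ^ 4 + 1 = 0) :
    x ^ 4 + p * x - q = 0 := by
  have hw : w ≠ 0 := by
    rintro rfl
    simp at h2
  have h16 : (16 : K) * w ^ 4 ≠ 0 := by
    have : (16 : K) = 2 ^ 4 := by norm_num
    rw [this]
    exact mul_ne_zero (pow_ne_zero _ two_ne_zero) (pow_ne_zero _ hw)
  have key := quartic_mul_sixteen_pow_four p q x w
  rw [h1, h2] at key
  simp only [mul_zero, sub_zero] at key
  exact (mul_eq_zero.mp key).resolve_right h16

theorem stmt17_general (p q x w : ℝ)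
    (h1 : (2 * x * w + 1) ^ 2 + 1 - 2 * p * w ^ 3 = 0)
    (h2 : -p ^ 2 * w ^ 6 + 4 * q * w ^ 4 + 1 = 0) :
    x ^ 4 + p * x - q = 0 :=
  quartic_eq_zero_of_resultant_system h1 h2

/-- if `(2xw+1)² + 1 - 2pw³ = 0` and `-p²w⁶ + 4qw⁴ + 1 = 0` with `p ≠ 0`,
then `x⁴ + px - q = 0`. -/
theorem stmt17 (p q x w : ℝ) (hp : p ≠ 0)
    (h1 : (2 * x * w + 1) ^ 2 + 1 - 2 * p * w ^ 3 = 0)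
    (h2 : -p ^ 2 * w ^ 6 + 4 * q * w ^ 4 + 1 = 0) :
    x ^ 4 + p * x - q = 0 :=
  stmt17_general p q x w h1 h2
end
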